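/- Let c ∈ ℂ^×, n ≥ 2, f(u,v) = (u-v+c)/(u-v). Let \bar t¹, ..., \bar t^{n-1} be finite sets of complex parameters, all parameters pairwise distinct, and \bar t⁰ = \bar t^n = ∅. Let λ₁, ..., λ_n : ℂ → ℂ be functions continuous and nonvanishing at a fixed point t ∈ \bar t^a (for some a ∈ {1,...,n-1}). Consider τ(z) = Σ_{i=1}^{n} λ_i(z)·f(z, \bar t^{i-1})·f(\bar t^i, z), where f(z, \bar x) = ∏_{x ∈ \bar x} f(z,x) and f(\bar x, z) = ∏_{x ∈ \bar x} f(x,z). Then lim_{z → t} (z - t)·τ(z) = c·[ λ_{a+1}(t)·f(t, \bar t^a \ {t})·f(\bar t^{a+1}, t) − λ_a(t)·f(\bar t^a \ {t}, t)·f(t, \bar t^{a-1}) ]. In particular, τ(z) extends regularly to z = t if and only if the Bethe equation λ_a(t)/λ_{a+1}(t) = [f(t, \bar t^a \ {t})/f(\bar t^a \ {t}, t)] · f(\bar t^{a+1}, t)/f(t, \bar t^{a-1}) holds (assuming the right-hand-side denominators are nonzero). -/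
import Mathlib

open Filter Topology

-- continuity of product ∏ (z - x + c)/(z - x) at tstar when tstar ∉ S
lemma contL (c tstar : ℂ) (S : Finset ℂ) (h : tstar ∉ S) :
    ContinuousAt (fun z => ∏ x ∈ S, (z - x + c)/(z - x)) tstar := by
  have : Tendsto (fun z => ∏ x ∈ S, (z - x + c)/(z - x)) (𝓝 tstar)
      (𝓝 (∏ x ∈ S, (tstar - x + c)/(tstar - x))) := by
    refine tendsto_finset_prod S fun x hx => ?_
    have hne : tstar - x ≠ 0 := sub_ne_zero.mpr (fun he => h (he ▸ hx))
    exact (((continuousAt_id.sub continuousAt_const).add continuousAt_const).div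
      (continuousAt_id.sub continuousAt_const) hne)
  exact this

lemma contR (c tstar : ℂ) (S : Finset ℂ) (h : tstar ∉ S) :
    ContinuousAt (fun z => ∏ x ∈ S, (x - z + c)/(x - z)) tstar := by
  have : Tendsto (fun z => ∏ x ∈ S, (x - z + c)/(x - z)) (𝓝 tstar)
      (𝓝 (∏ x ∈ S, (x - tstar + c)/(x - tstar))) := by
    refine tendsto_finset_prod S fun x hx => ?_
    have hne : x - tstar ≠ 0 := sub_ne_zero.mpr (fun he => h (he ▸ hx))
    exact (((continuousAt_const.sub continuousAt_id).add continuousAt_const).div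
      (continuousAt_const.sub continuousAt_id) hne)
  exact this

/-- Pole cancellation at the Bethe roots: the residue of the transfer-matrix
eigenvalue `τ(z) = Σ_{i=1}^n λ_i(z) f(z,\bar t^{i-1}) f(\bar t^i,z)` at a root
`t* ∈ \bar t^a` is
`c·[λ_{a+1}(t*) f(t*,\bar t^a∖{t*}) f(\bar t^{a+1},t*) − λ_a(t*) f(\bar t^a∖{t*},t*) f(t*,\bar t^{a-1})]`. -/
theorem stmt18 (c : ℂ) (hc : c ≠ 0) (n : ℕ) (hn : 2 ≤ n)
    (t : ℕ → Finset ℂ) (ht0 : t 0 = ∅) (htn : t n = ∅)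
    (hdisj : ∀ s s' : ℕ, s ≠ s' → Disjoint (t s) (t s'))
    (a : ℕ) (ha : a ∈ Finset.Icc 1 (n - 1))
    (tstar : ℂ) (htstar : tstar ∈ t a)
    (lam : ℕ → ℂ → ℂ)
    (hlam : ∀ i ∈ Finset.Icc 1 n, ContinuousAt (lam i) tstar ∧ lam i tstar ≠ 0) :
    let f : ℂ → ℂ → ℂ := fun u v => (u - v + c) / (u - v)
    let fL : ℂ → Finset ℂ → ℂ := fun z S => ∏ x ∈ S, f z x
    let fR : Finset ℂ → ℂ → ℂ := fun S z => ∏ x ∈ S, f x z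
    let τ : ℂ → ℂ := fun z =>
      ∑ i ∈ Finset.Icc 1 n, lam i z * fL z (t (i - 1)) * fR (t i) z
    Tendsto (fun z => (z - tstar) * τ z) (nhdsWithin tstar {tstar}ᶜ)
      (nhds (c * (lam (a + 1) tstar * fL tstar ((t a).erase tstar) * fR (t (a + 1)) tstar
        - lam a tstar * fR ((t a).erase tstar) tstar * fL tstar (t (a - 1))))) := by
  intro f fL fR τ
  obtain ⟨ha1, ha2'⟩ := Finset.mem_Icc.mp ha
  have ha2 : a + 1 ≤ n := by omega
  have htnot : ∀ s : ℕ, s ≠ a → tstar ∉ t s := fun s hs hmem =>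
    (Finset.disjoint_left.mp (hdisj s a hs) hmem) htstar
  -- the limit contributions of each summand
  set A : ℂ := c * (lam (a + 1) tstar * fL tstar ((t a).erase tstar) * fR (t (a + 1)) tstar)
  set B : ℂ := c * (lam a tstar * fR ((t a).erase tstar) tstar * fL tstar (t (a - 1)))
  set L : ℕ → ℂ := fun i => if i = a then -B else if i = a + 1 then A else 0 with hL
  have hsum : ∑ i ∈ Finset.Icc 1 n, L i
      = c * (lam (a + 1) tstar * fL tstar ((t a).erase tstar) * fR (t (a + 1)) tstar
        - lam a tstar * fR ((t a).erase tstar) tstar * fL tstar (t (a - 1))) := by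
    have hLa : L a = -B := by simp [hL]
    have hLa1 : L (a + 1) = A := by simp [hL]
    rw [Finset.sum_eq_add_of_mem a (a + 1) (Finset.mem_Icc.mpr ⟨ha1, by omega⟩)
      (Finset.mem_Icc.mpr ⟨by omega, ha2⟩) (by omega)
      (fun i _ hi => by simp [hL, hi.1, hi.2]), hLa, hLa1]
    simp only [A, B]
    ring
  rw [← hsum]
  have key : Tendsto (fun z => ∑ i ∈ Finset.Icc 1 n,
      (z - tstar) * (lam i z * fL z (t (i - 1)) * fR (t i) z))
      (nhdsWithin tstar {tstar}ᶜ) (nhds (∑ i ∈ Finset.Icc 1 n, L i)) := by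
    refine tendsto_finset_sum _ fun i hi => ?_
    obtain ⟨hi1, hi2⟩ := Finset.mem_Icc.mp hi
    obtain ⟨hcont, _⟩ := hlam i hi
    by_cases hia : i = a
    · -- pole from fR (t a)
      subst hia
      have herase : tstar ∉ (t i).erase tstar := Finset.notMem_erase _ _
      have hprev : tstar ∉ t (i - 1) := htnot _ (by omega)
      have heq : ∀ z ∈ ({tstar}ᶜ : Set ℂ),
          (-(tstar - z + c)) * (lam i z * (∏ x ∈ t (i-1), (z - x + c)/(z - x))
            * ∏ x ∈ (t i).erase tstar, (x - z + c)/(x - z))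
          = (z - tstar) * (lam i z * fL z (t (i - 1)) * fR (t i) z) := by
        intro z hz
        have hne : tstar - z ≠ 0 := sub_ne_zero.mpr fun he => hz (by simp [← he])
        show _ = (z - tstar) * (lam i z * (∏ x ∈ t (i-1), (z - x + c)/(z - x))
            * ∏ x ∈ t i, (x - z + c)/(x - z))
        rw [← Finset.mul_prod_erase (t i) _ htstar]
        have hq : (z - tstar) * ((tstar - z + c)/(tstar - z)) = -(tstar - z + c) := by
          field_simp
          ring
        linear_combination (-(lam i z) * (∏ x ∈ t (i-1), (z - x + c)/(z - x))
          * ∏ x ∈ (t i).erase tstar, (x - z + c)/(x - z)) * hq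
      refine Tendsto.congr' (Filter.eventuallyEq_of_mem self_mem_nhdsWithin heq) ?_
      have hlim : Tendsto (fun z => (-(tstar - z + c)) * (lam i z
            * (∏ x ∈ t (i-1), (z - x + c)/(z - x))
            * ∏ x ∈ (t i).erase tstar, (x - z + c)/(x - z)))
          (𝓝 tstar) (𝓝 ((-(tstar - tstar + c)) * (lam i tstar
            * (∏ x ∈ t (i-1), (tstar - x + c)/(tstar - x))
            * ∏ x ∈ (t i).erase tstar, (x - tstar + c)/(x - tstar)))) :=
        (((continuousAt_const.sub continuousAt_id).add continuousAt_const).neg.mul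
          ((hcont.mul (contL c tstar _ hprev)).mul (contR c tstar _ herase)))
      have : (-(tstar - tstar + c)) * (lam i tstar
            * (∏ x ∈ t (i-1), (tstar - x + c)/(tstar - x))
            * ∏ x ∈ (t i).erase tstar, (x - tstar + c)/(x - tstar)) = L i := by
        simp only [hL, if_pos rfl, B, fL, fR, f]
        ring
      rw [this] at hlim
      exact hlim.mono_left nhdsWithin_le_nhds
    · by_cases hia1 : i = a + 1
      · subst hia1
        have herase : tstar ∉ (t a).erase tstar := Finset.notMem_erase _ _
        have hnext : tstar ∉ t (a + 1) := htnot _ (by omega)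
        have heq : ∀ z ∈ ({tstar}ᶜ : Set ℂ),
            ((z - tstar + c)) * (lam (a+1) z
              * (∏ x ∈ (t a).erase tstar, (z - x + c)/(z - x))
              * ∏ x ∈ t (a+1), (x - z + c)/(x - z))
            = (z - tstar) * (lam (a+1) z * fL z (t (a + 1 - 1)) * fR (t (a+1)) z) := by
          intro z hz
          have hne : z - tstar ≠ 0 := sub_ne_zero.mpr fun he => hz (by simp [he])
          show _ = (z - tstar) * (lam (a+1) z * (∏ x ∈ t (a + 1 - 1), (z - x + c)/(z - x))
              * ∏ x ∈ t (a+1), (x - z + c)/(x - z))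
          have : a + 1 - 1 = a := by omega
          rw [this, ← Finset.mul_prod_erase (t a) _ htstar]
          have hq : (z - tstar) * ((z - tstar + c)/(z - tstar)) = z - tstar + c := by
            field_simp
          linear_combination (-(lam (a+1) z) * (∏ x ∈ (t a).erase tstar, (z - x + c)/(z - x))
            * ∏ x ∈ t (a+1), (x - z + c)/(x - z)) * hq
        refine Tendsto.congr' (Filter.eventuallyEq_of_mem self_mem_nhdsWithin heq) ?_
        have hlim : Tendsto (fun z => ((z - tstar + c)) * (lam (a+1) z
              * (∏ x ∈ (t a).erase tstar, (z - x + c)/(z - x))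
              * ∏ x ∈ t (a+1), (x - z + c)/(x - z)))
            (𝓝 tstar) (𝓝 ((tstar - tstar + c) * (lam (a+1) tstar
              * (∏ x ∈ (t a).erase tstar, (tstar - x + c)/(tstar - x))
              * ∏ x ∈ t (a+1), (x - tstar + c)/(x - tstar)))) :=
          (((continuousAt_id.sub continuousAt_const).add continuousAt_const).mul
            ((hcont.mul (contL c tstar _ herase)).mul (contR c tstar _ hnext)))
        have : (tstar - tstar + c) * (lam (a+1) tstar
              * (∏ x ∈ (t a).erase tstar, (tstar - x + c)/(tstar - x))
              * ∏ x ∈ t (a+1), (x - tstar + c)/(x - tstar)) = L (a+1) := by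
          rw [show L (a + 1) = A from by simp [hL]]
          simp only [A, fL, fR, f]
          ring
        rw [this] at hlim
        exact hlim.mono_left nhdsWithin_le_nhds
      · -- regular term: continuous, multiplied by (z - tstar) → 0
        have hprev : tstar ∉ t (i - 1) := htnot _ (by omega)
        have hcur : tstar ∉ t i := htnot _ hia
        have hlim : Tendsto (fun z => (z - tstar) * (lam i z
              * (∏ x ∈ t (i-1), (z - x + c)/(z - x))
              * ∏ x ∈ t i, (x - z + c)/(x - z)))
            (𝓝 tstar) (𝓝 ((tstar - tstar) * (lam i tstar
              * (∏ x ∈ t (i-1), (tstar - x + c)/(tstar - x))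
              * ∏ x ∈ t i, (x - tstar + c)/(x - tstar)))) :=
          ((continuousAt_id.sub continuousAt_const).mul
            ((hcont.mul (contL c tstar _ hprev)).mul (contR c tstar _ hcur)))
        have : (tstar - tstar) * (lam i tstar
              * (∏ x ∈ t (i-1), (tstar - x + c)/(tstar - x))
              * ∏ x ∈ t i, (x - tstar + c)/(x - tstar)) = L i := by
          simp [hL, hia, hia1]
        rw [this] at hlim
        exact hlim.mono_left nhdsWithin_le_nhds
  refine key.congr fun z => ?_
  simp [τ, Finset.mul_sum, mul_comm, mul_assoc, mul_left_comm]
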